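/- Fix d ≥ 1 and 0 < ε < 1/2. Let μ be a Borel probability measure on ℝ^d which is ε-radial, and let ν be a Borel probability measure on ℝ^d with d_TV(μ, ν) ≤ ε². Then ν is 5ε-radial. -/

import Mathlib

open MeasureTheory ENNReal
open scoped RealInnerProductSpace

/-- The Monge–Kantorovich transportation cost between two measures, for cost function `c`:
the infimum of `∫ c(x,y) dγ` over all couplings `γ` of `μ` and `ν`. -/
noncomputable def Wcost {X : Type*} [MeasurableSpace X] (c : X → X → ℝ≥0∞)
    (μ ν : Measure X) : ℝ≥0∞ :=
  ⨅ γ ∈ {γ : Measure (X × X) |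
      Measure.map Prod.fst γ = μ ∧ Measure.map Prod.snd γ = ν},
    ∫⁻ p, c p.1 p.2 ∂γ

/-- The geodesic distance on the unit sphere `S^{d-1}`, `ρ(x,y) = arccos (x·y)`,
as an `ℝ≥0∞`-valued cost on `ℝ^d`. -/
noncomputable def geoCost {d : ℕ} (x y : EuclideanSpace ℝ (Fin d)) : ℝ≥0∞ :=
  ENNReal.ofReal (Real.arccos ⟪x, y⟫)

/-- The `L¹` Monge–Kantorovich distance with respect to the geodesic metric on `S^{d-1}`,
for measures supported on the unit sphere of `ℝ^d`. -/
noncomputable def W1geo {d : ℕ} (μ ν : Measure (EuclideanSpace ℝ (Fin d))) : ℝ≥0∞ :=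
  Wcost geoCost μ ν

/-- `σ` is the uniform (rotation-invariant) probability measure on the unit sphere
`S^{d-1} ⊂ ℝ^d`. -/
def IsUniformSphere {d : ℕ} (σ : Measure (EuclideanSpace ℝ (Fin d))) : Prop :=
  IsProbabilityMeasure σ ∧ σ (Metric.sphere (0 : EuclideanSpace ℝ (Fin d)) 1) = 1 ∧
    ∀ O : EuclideanSpace ℝ (Fin d) ≃ₗᵢ[ℝ] EuclideanSpace ℝ (Fin d),
      Measure.map (fun x => O x) σ = σ

/-- The radial projection `R(x) = x/|x|`. -/
noncomputable def rproj {d : ℕ} (x : EuclideanSpace ℝ (Fin d)) : EuclideanSpace ℝ (Fin d) :=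
  ‖x‖⁻¹ • x

/-- The spherical shell `S(J) = {x : |x| ∈ J}`. -/
def shell (d : ℕ) (J : Set ℝ) : Set (EuclideanSpace ℝ (Fin d)) := {x | ‖x‖ ∈ J}

/-- The conditioning `μ|_A` of a measure on a set. -/
noncomputable def condOn {α : Type*} [MeasurableSpace α] (μ : Measure α) (A : Set α) :
    Measure α := (μ A)⁻¹ • μ.restrict A

/-- `μ` is ε-radial (with respect to the uniform measure `σ` on the sphere): for every
interval `J ⊂ (0,∞)` with `μ(S(J)) ≥ ε`, the radial projection of `μ|_{S(J)}` is within
transportation distance `ε` of `σ`. -/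
def IsRadial {d : ℕ} (σ : Measure (EuclideanSpace ℝ (Fin d))) (ε : ℝ)
    (μ : Measure (EuclideanSpace ℝ (Fin d))) : Prop :=
  ∀ J : Set ℝ, J.OrdConnected → J ⊆ Set.Ioi 0 → ENNReal.ofReal ε ≤ μ (shell d J) →
    W1geo (Measure.map rproj (condOn μ (shell d J))) σ ≤ ENNReal.ofReal ε

/-!
Transport `ν|_{S}` by first moving the mass it shares with `μ|_{S}` along an almost optimal
coupling of `R_*(μ|_{S})` with `σ`, and then the remaining mass, of size at most the total
variation distance `δ` of the two conditioned measures, arbitrarily at cost at most `π`. This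
gives `W₁(R_*(ν|_{S}), σ) ≤ ε + π δ`. Conditioning on a shell of `ν`-mass at least `5ε`
only inflates the total variation bound `ε²` to `δ ≤ ε / 2`, and `ε + π ε / 2 ≤ 5ε`.
-/

open ProbabilityTheory Set

namespace MeasureTheory.Measure

variable {X : Type*} [MeasurableSpace X]

theorem map_fst_apply_univ {Y : Type*} [MeasurableSpace Y] (γ : Measure (X × Y)) :
    γ.map Prod.fst univ = γ univ := by
  rw [map_apply measurable_fst MeasurableSet.univ, preimage_univ]

theorem map_snd_apply_univ {Y : Type*} [MeasurableSpace Y] (γ : Measure (X × Y)) :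
    γ.map Prod.snd univ = γ univ := by
  rw [map_apply measurable_snd MeasurableSet.univ, preimage_univ]

theorem map_inv_smul_prod {α β : Measure X} [IsFiniteMeasure α] [IsFiniteMeasure β]
    (h : α univ = β univ) :
    ((α univ)⁻¹ • α.prod β).map Prod.fst = α ∧ ((α univ)⁻¹ • α.prod β).map Prod.snd = β := by
  rw [Measure.map_smul, Measure.map_smul, map_fst_prod, map_snd_prod, ← h]
  rcases eq_or_ne (α univ) 0 with h0 | h0
  · have hβ0 : β univ = 0 := h ▸ h0
    simp [measure_univ_eq_zero.mp h0, measure_univ_eq_zero.mp hβ0]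
  · simp [smul_smul, ENNReal.inv_mul_cancel h0 (measure_ne_top α univ)]

theorem exists_le_map_fst_eq {Y : Type*} [MeasurableSpace Y] {γ : Measure (X × Y)}
    [IsFiniteMeasure γ] {ρ : Measure X} (hρ : ρ ≤ γ.map Prod.fst) :
    ∃ γ' ≤ γ, γ'.map Prod.fst = ρ := by
  have : IsFiniteMeasure ρ := isFiniteMeasure_of_le _ hρ
  set f : X → ℝ≥0∞ := fun x => min (ρ.rnDeriv (γ.map Prod.fst) x) 1
  have hf : Measurable f := (measurable_rnDeriv _ _).min measurable_const
  have hρf : (γ.map Prod.fst).withDensity f = ρ := by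
    rw [withDensity_congr_ae (g := ρ.rnDeriv (γ.map Prod.fst)) (by
      filter_upwards [rnDeriv_le_one_of_le hρ] with x hx using min_eq_left hx)]
    exact withDensity_rnDeriv_eq _ _ (absolutelyContinuous_of_le hρ)
  refine ⟨γ.withDensity (fun p => f p.1), le_iff.mpr fun A hA => ?_, ?_⟩
  · rw [withDensity_apply _ hA]
    exact (setLIntegral_mono measurable_const fun p _ => min_le_right _ _).trans
      (setLIntegral_one A).le
  · rw [← hρf]
    ext A hA
    rw [map_apply measurable_fst hA, withDensity_apply _ (measurable_fst hA),
      withDensity_apply _ hA, setLIntegral_map hA hf measurable_fst]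

theorem measure_univ_le_inf_add {α β : Measure X} {δ : ℝ≥0∞}
    (h : ∀ E, MeasurableSet E → α E ≤ β E + δ) : α univ ≤ (α ⊓ β) univ + δ := by
  rw [inf_apply MeasurableSet.univ, ENNReal.sInf_add]
  refine le_iInf₂ fun m ⟨t, ht⟩ => ?_
  set M := toMeasurable α t
  have hM : MeasurableSet M := measurableSet_toMeasurable α t
  calc α univ = α M + α Mᶜ := (measure_add_measure_compl hM).symm
    _ ≤ α M + (β Mᶜ + δ) := by gcongr; exact h _ hM.compl
    _ ≤ α t + (β tᶜ + δ) := by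
        rw [measure_toMeasurable]
        gcongr
        exact subset_toMeasurable α t
    _ = m + δ := by rw [ht, inter_univ, inter_univ, add_assoc]

end MeasureTheory.Measure

section Transport

variable {X : Type*} [MeasurableSpace X]

theorem Wcost_le_lintegral {c : X → X → ℝ≥0∞} {α σ : Measure X} (γ : Measure (X × X))
    (hfst : γ.map Prod.fst = α) (hsnd : γ.map Prod.snd = σ) :
    Wcost c α σ ≤ ∫⁻ p, c p.1 p.2 ∂γ :=
  iInf₂_le γ ⟨hfst, hsnd⟩

/-- A partial coupling is completed to a coupling by the normalized product of the two
leftover marginals, which costs at most `C` per unit of leftover mass. -/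
theorem Wcost_le_lintegral_add_of_map_le {c : X → X → ℝ≥0∞} {C : ℝ≥0∞}
    (hc : ∀ x y, c x y ≤ C) {α σ : Measure X} {γ : Measure (X × X)} [IsFiniteMeasure α]
    [IsFiniteMeasure γ] (hασ : α univ = σ univ) (hfst : γ.map Prod.fst ≤ α)
    (hsnd : γ.map Prod.snd ≤ σ) :
    Wcost c α σ ≤ ∫⁻ p, c p.1 p.2 ∂γ + C * (α univ - γ univ) := by
  have : IsFiniteMeasure σ := ⟨hασ ▸ measure_lt_top α univ⟩
  set α' := α - γ.map Prod.fst
  set σ' := σ - γ.map Prod.snd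
  have hα' : α' univ = α univ - γ univ := by
    rw [Measure.sub_apply MeasurableSet.univ hfst, Measure.map_fst_apply_univ]
  have hσ' : σ' univ = α univ - γ univ := by
    rw [Measure.sub_apply MeasurableSet.univ hsnd, Measure.map_snd_apply_univ, hασ]
  set P := (α' univ)⁻¹ • α'.prod σ'
  obtain ⟨hP₁, hP₂⟩ := Measure.map_inv_smul_prod (hα'.trans hσ'.symm)
  have hPuniv : P univ = α univ - γ univ := by rw [← Measure.map_fst_apply_univ, hP₁, hα']
  have hcostP : ∫⁻ p, c p.1 p.2 ∂P ≤ C * (α univ - γ univ) :=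
    calc ∫⁻ p, c p.1 p.2 ∂P ≤ ∫⁻ _, C ∂P := lintegral_mono fun p => hc p.1 p.2
      _ = C * (α univ - γ univ) := by rw [lintegral_const, hPuniv]
  refine (Wcost_le_lintegral (γ + P) ?_ ?_).trans ?_
  · rw [Measure.map_add _ _ measurable_fst, hP₁, add_comm, Measure.sub_add_cancel_of_le hfst]
  · rw [Measure.map_add _ _ measurable_snd, hP₂, add_comm, Measure.sub_add_cancel_of_le hsnd]
  · rw [lintegral_add_measure]
    gcongr

/-- The two measures share the mass `(α ⊓ β) univ`, which can be transported as `β` is;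
only the rest of `α` has to be moved at the maximal cost `C`. -/
theorem Wcost_le_Wcost_add_mul_sub_inf {c : X → X → ℝ≥0∞} {C : ℝ≥0∞}
    (hc : ∀ x y, c x y ≤ C) {α β σ : Measure X} [IsFiniteMeasure α] (hαβ : α univ = β univ) :
    Wcost c α σ ≤ Wcost c β σ + C * (α univ - (α ⊓ β) univ) := by
  conv_rhs => rw [Wcost, ENNReal.iInf₂_add]
  refine le_iInf₂ fun γ ⟨hfst, hsnd⟩ => ?_
  have : IsFiniteMeasure γ :=
    ⟨by rw [← Measure.map_fst_apply_univ, hfst, ← hαβ]; exact measure_lt_top α univ⟩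
  obtain ⟨γ', hγ', hγ'fst⟩ := Measure.exists_le_map_fst_eq (inf_le_right.trans hfst.ge)
  have : IsFiniteMeasure γ' := isFiniteMeasure_of_le _ hγ'
  have hασ : α univ = σ univ := by rw [hαβ, ← hfst, ← hsnd, Measure.map_fst_apply_univ,
    Measure.map_snd_apply_univ]
  calc Wcost c α σ ≤ ∫⁻ p, c p.1 p.2 ∂γ' + C * (α univ - γ' univ) :=
        Wcost_le_lintegral_add_of_map_le hc hασ (hγ'fst.le.trans inf_le_left)
          ((Measure.map_mono hγ' measurable_snd).trans hsnd.le)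
    _ ≤ ∫⁻ p, c p.1 p.2 ∂γ + C * (α univ - (α ⊓ β) univ) := by
        rw [← Measure.map_fst_apply_univ γ', hγ'fst]
        gcongr

theorem Wcost_le_Wcost_add_mul {c : X → X → ℝ≥0∞} {C : ℝ≥0∞} (hc : ∀ x y, c x y ≤ C)
    {α β σ : Measure X} [IsFiniteMeasure α] (hαβ : α univ = β univ) {δ : ℝ≥0∞}
    (h : ∀ E, MeasurableSet E → α E ≤ β E + δ) :
    Wcost c α σ ≤ Wcost c β σ + C * δ := by
  refine (Wcost_le_Wcost_add_mul_sub_inf hc hαβ).trans ?_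
  gcongr
  exact tsub_le_iff_left.mpr (Measure.measure_univ_le_inf_add h)

end Transport

section Conditioning

variable {Ω : Type*} [MeasurableSpace Ω]

theorem condOn_eq_cond (μ : Measure Ω) (S : Set Ω) : condOn μ S = μ[|S] := rfl

theorem cond_apply_toReal (μ : Measure Ω) (S : Set Ω) {E : Set Ω} (hE : MeasurableSet E) :
    (μ[E|S]).toReal = (μ (S ∩ E)).toReal / (μ S).toReal := by
  rw [cond_apply' hE, mul_comm, ← div_eq_mul_inv, ENNReal.toReal_div]

theorem div_sub_div_le_of_abs_sub_le {a b A B η : ℝ} (hA : 0 ≤ A) (hAa : A ≤ a) (ha : 0 < a)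
    (hb : 0 < b) (hab : |b - a| ≤ η) (hAB : |B - A| ≤ η) : A / a - B / b ≤ 2 * η / b := by
  have h₁ := abs_le.mp hab
  have h₂ := abs_le.mp hAB
  have hnum : A * b - a * B ≤ 2 * η * a := by
    nlinarith [mul_le_mul_of_nonneg_left h₁.2 hA, mul_le_mul_of_nonneg_left h₂.1 ha.le]
  calc A / a - B / b = (A * b - a * B) / (a * b) := div_sub_div _ _ ha.ne' hb.ne'
    _ ≤ 2 * η * a / (a * b) := by gcongr
    _ = 2 * η / b := by field_simp

theorem cond_apply_le_cond_apply_add {μ ν : Measure Ω} [IsFiniteMeasure μ] [IsFiniteMeasure ν]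
    {η : ℝ} (hTV : ∀ A, MeasurableSet A → |(μ A).toReal - (ν A).toReal| ≤ η) {S : Set Ω}
    (hS : MeasurableSet S) (hμS : μ S ≠ 0) (hνS : ν S ≠ 0) {E : Set Ω} (hE : MeasurableSet E) :
    ν[E|S] ≤ μ[E|S] + ENNReal.ofReal (2 * η / (μ S).toReal) := by
  have hη : 0 ≤ η := (abs_nonneg _).trans (hTV S hS)
  have hμS' : 0 < (μ S).toReal := ENNReal.toReal_pos hμS (measure_ne_top μ S)
  have hνS' : 0 < (ν S).toReal := ENNReal.toReal_pos hνS (measure_ne_top ν S)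
  have hreal : (ν[E|S]).toReal - (μ[E|S]).toReal ≤ 2 * η / (μ S).toReal := by
    rw [cond_apply_toReal _ _ hE, cond_apply_toReal _ _ hE]
    refine div_sub_div_le_of_abs_sub_le ENNReal.toReal_nonneg
      (ENNReal.toReal_mono (measure_ne_top ν S) (measure_mono inter_subset_left)) hνS' hμS'
      (hTV S hS) (hTV _ (hS.inter hE))
  rw [← ENNReal.ofReal_toReal (measure_ne_top (ν[|S]) E),
    ← ENNReal.ofReal_toReal (measure_ne_top (μ[|S]) E),
    ← ENNReal.ofReal_add ENNReal.toReal_nonneg (by positivity)]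
  exact ENNReal.ofReal_le_ofReal (by linarith)

end Conditioning

theorem geoCost_le_pi {d : ℕ} (x y : EuclideanSpace ℝ (Fin d)) :
    geoCost x y ≤ ENNReal.ofReal Real.pi :=
  ENNReal.ofReal_le_ofReal (Real.arccos_le_pi _)

theorem measurable_rproj {d : ℕ} : Measurable (rproj (d := d)) :=
  measurable_norm.inv.smul measurable_id

theorem W1geo_map_le_add {d : ℕ} {Ω : Type*} [MeasurableSpace Ω]
    {f : Ω → EuclideanSpace ℝ (Fin d)} (hf : Measurable f) {α β : Measure Ω}
    [IsProbabilityMeasure α] [IsProbabilityMeasure β] {δ : ℝ≥0∞}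
    (h : ∀ E, MeasurableSet E → α E ≤ β E + δ) (σ : Measure (EuclideanSpace ℝ (Fin d))) :
    W1geo (α.map f) σ ≤ W1geo (β.map f) σ + ENNReal.ofReal Real.pi * δ := by
  have := Measure.isProbabilityMeasure_map (μ := α) hf.aemeasurable
  refine Wcost_le_Wcost_add_mul geoCost_le_pi ?_ fun E hE => ?_
  · rw [Measure.map_apply hf MeasurableSet.univ, Measure.map_apply hf MeasurableSet.univ,
      preimage_univ, measure_univ, measure_univ]
  · rw [Measure.map_apply hf hE, Measure.map_apply hf hE]
    exact h _ (hf hE)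

theorem stmt5_general {d : ℕ} (ε : ℝ) (hε0 : 0 < ε)
    (σ : Measure (EuclideanSpace ℝ (Fin d)))
    (μ ν : Measure (EuclideanSpace ℝ (Fin d)))
    [IsProbabilityMeasure μ] [IsProbabilityMeasure ν]
    (hrad : IsRadial σ ε μ)
    (hTV : ∀ A : Set (EuclideanSpace ℝ (Fin d)), MeasurableSet A →
      |(μ A).toReal - (ν A).toReal| ≤ ε ^ 2) :
    IsRadial σ (5 * ε) ν := by
  intro J hJc hJ0 hνS
  set S := shell d J
  have hS : MeasurableSet S := measurable_norm hJc.measurableSet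
  have hνS' : 5 * ε ≤ (ν S).toReal :=
    (ENNReal.ofReal_le_iff_le_toReal (measure_ne_top _ _)).mp hνS
  have hμS' : 4 * ε ≤ (μ S).toReal := by
    -- `ν S ≤ 1` forces `ε ≤ 1 / 5`, hence `μ S ≥ 5ε - ε² ≥ 4ε`
    have hν1 : (ν S).toReal ≤ 1 := measureReal_le_one
    nlinarith [(abs_le.mp (hTV S hS)).1]
  have hμS : ENNReal.ofReal ε ≤ μ S :=
    (ENNReal.ofReal_le_iff_le_toReal (measure_ne_top _ _)).mpr (by linarith)
  have hμS0 : μ S ≠ 0 := (ENNReal.toReal_pos_iff.mp (by linarith)).1.ne'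
  have hνS0 : ν S ≠ 0 := (ENNReal.toReal_pos_iff.mp (by linarith)).1.ne'
  have hcond (E : Set _) (hE : MeasurableSet E) :
      ν[E|S] ≤ μ[E|S] + ENNReal.ofReal (ε / 2) := by
    refine (cond_apply_le_cond_apply_add hTV hS hμS0 hνS0 hE).trans ?_
    refine add_le_add le_rfl (ENNReal.ofReal_le_ofReal ?_)
    rw [div_le_iff₀ (by linarith)]
    nlinarith
  have := cond_isProbabilityMeasure hμS0
  have := cond_isProbabilityMeasure hνS0
  rw [condOn_eq_cond]
  calc W1geo (ν[|S].map rproj) σ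
      ≤ W1geo (μ[|S].map rproj) σ + ENNReal.ofReal Real.pi * ENNReal.ofReal (ε / 2) :=
        W1geo_map_le_add measurable_rproj hcond σ
    _ ≤ ENNReal.ofReal ε + ENNReal.ofReal Real.pi * ENNReal.ofReal (ε / 2) := by
        gcongr
        exact hrad J hJc hJ0 hμS
    _ ≤ ENNReal.ofReal (5 * ε) := by
        rw [← ENNReal.ofReal_mul Real.pi_pos.le, ← ENNReal.ofReal_add hε0.le (by positivity)]
        exact ENNReal.ofReal_le_ofReal (by nlinarith [Real.pi_le_four])

/-- If `μ` is ε-radial and `d_TV(μ,ν) ≤ ε²`, then `ν` is 5ε-radial. -/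
theorem stmt5 {d : ℕ} (hd : 1 ≤ d) (ε : ℝ) (hε0 : 0 < ε) (hε : ε < 1/2)
    (σ : Measure (EuclideanSpace ℝ (Fin d))) (hσ : IsUniformSphere σ)
    (μ ν : Measure (EuclideanSpace ℝ (Fin d)))
    [IsProbabilityMeasure μ] [IsProbabilityMeasure ν]
    (hrad : IsRadial σ ε μ)
    (hTV : ∀ A : Set (EuclideanSpace ℝ (Fin d)), MeasurableSet A →
      |(μ A).toReal - (ν A).toReal| ≤ ε ^ 2) :
    IsRadial σ (5 * ε) ν :=
  stmt5_general ε hε0 σ μ ν hrad hTV
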